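/- Let $f_0$ and $g$ be probability density functions on $\mathbb{R}^d$ with $f_0 \ne g$ on a set of positive measure, and let $\rho > 0$. Then $\int \frac{f_0(x)^2 + \rho^2 g(x)^2}{(1+\rho)(f_0(x) + \rho g(x))}\, dx > \frac{1 + \rho^2}{(1+\rho)^2}$, equivalently $1 - \delta(f_0,g,\rho) < \frac{2\rho}{(1+\rho)^2}$ where $\delta(f_0,g,\rho)$ denotes the integral on the left. -/

import Mathlib

/-!
The integrand `k(s, t) = (s² + ρ² t²) / ((1 + ρ)(s + ρ t))` is positively homogeneous of degree
one and convex, so it lies above its tangent plane `a s + b t` along the diagonal `s = t`, the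
excess being `2ρ²(s - t)² / ((1 + ρ)³(s + ρ t))`. Integrating the tangent plane against two
probability densities gives `a + b = (1 + ρ²)/(1 + ρ)²`, and the excess has positive integral as
soon as the densities differ on a set of positive measure.
-/

open MeasureTheory

namespace HenzePenrose

noncomputable section

def kernel (ρ s t : ℝ) : ℝ := (s ^ 2 + ρ ^ 2 * t ^ 2) / ((1 + ρ) * (s + ρ * t))

/-- The partial derivatives `∂ₛ kernel ρ 1 1` and `∂ₜ kernel ρ 1 1`. -/
def tangentCoeffs (ρ : ℝ) : ℝ × ℝ :=
  ((1 + 2 * ρ - ρ ^ 2) / (1 + ρ) ^ 3, ρ * (ρ ^ 2 + 2 * ρ - 1) / (1 + ρ) ^ 3)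

def defect (ρ s t : ℝ) : ℝ := 2 * ρ ^ 2 * (s - t) ^ 2 / ((1 + ρ) ^ 3 * (s + ρ * t))

end

variable {ρ s t : ℝ}

lemma tangentCoeffs_fst_add_snd (hρ : 1 + ρ ≠ 0) :
    (tangentCoeffs ρ).1 + (tangentCoeffs ρ).2 = (1 + ρ ^ 2) / (1 + ρ) ^ 2 := by
  simp only [tangentCoeffs]
  field_simp
  ring

lemma kernel_of_add_eq_zero (h : s + ρ * t = 0) : kernel ρ s t = 0 := by
  simp [kernel, h]

lemma kernel_nonneg (hρ : 0 ≤ ρ) (hs : 0 ≤ s) (ht : 0 ≤ t) : 0 ≤ kernel ρ s t := by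
  unfold kernel
  positivity

lemma kernel_le (hρ : 0 ≤ ρ) (hs : 0 ≤ s) (ht : 0 ≤ t) :
    kernel ρ s t ≤ (s + ρ * t) / (1 + ρ) := by
  rcases (add_nonneg hs (mul_nonneg hρ ht)).eq_or_lt with h | h
  · rw [kernel_of_add_eq_zero h.symm, ← h, zero_div]
  · rw [kernel, div_le_div_iff₀ (by positivity) (by positivity)]
    nlinarith [mul_nonneg (mul_nonneg (mul_nonneg hs ht) hρ) (by linarith : (0 : ℝ) ≤ 1 + ρ)]

lemma kernel_eq_tangent_add_defect (hρ : 0 < ρ) (hs : 0 ≤ s) (ht : 0 ≤ t) :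
    kernel ρ s t = (tangentCoeffs ρ).1 * s + (tangentCoeffs ρ).2 * t + defect ρ s t := by
  rcases (add_nonneg hs (mul_nonneg hρ.le ht)).eq_or_lt with h | h
  · have hs0 : s = 0 := by nlinarith [mul_nonneg hρ.le ht]
    have ht0 : t = 0 := by nlinarith
    simp [kernel, defect, hs0, ht0]
  · simp only [kernel, tangentCoeffs, defect]
    have : 0 < 1 + ρ := by linarith
    field_simp
    ring

lemma defect_nonneg (hρ : 0 ≤ ρ) (hs : 0 ≤ s) (ht : 0 ≤ t) : 0 ≤ defect ρ s t := by
  unfold defect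
  positivity

lemma defect_pos (hρ : 0 < ρ) (hs : 0 ≤ s) (ht : 0 ≤ t) (hst : s ≠ t) : 0 < defect ρ s t := by
  have hsum : 0 < s + ρ * t := by
    rcases hs.eq_or_lt with rfl | hs
    · simpa using mul_pos hρ (ht.lt_of_ne' (Ne.symm hst))
    · positivity
  have : (s - t) ^ 2 ≠ 0 := pow_ne_zero 2 (sub_ne_zero.mpr hst)
  unfold defect
  positivity

variable {α : Type*} [MeasurableSpace α] {μ : Measure α} {f g : α → ℝ}

lemma integrable_kernel (hρ : 0 ≤ ρ) (hf : Integrable f μ) (hg : Integrable g μ)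
    (hf0 : ∀ x, 0 ≤ f x) (hg0 : ∀ x, 0 ≤ g x) :
    Integrable (fun x => kernel ρ (f x) (g x)) μ := by
  refine ((hf.add (hg.const_mul ρ)).div_const (1 + ρ)).mono' ?_ (.of_forall fun x => ?_)
  · have hf' := hf.aemeasurable
    have hg' := hg.aemeasurable
    unfold kernel
    exact (by fun_prop : AEMeasurable _ μ).aestronglyMeasurable
  · rw [Real.norm_of_nonneg (kernel_nonneg hρ (hf0 x) (hg0 x))]
    exact kernel_le hρ (hf0 x) (hg0 x)

lemma integrable_defect (hρ : 0 < ρ) (hf : Integrable f μ) (hg : Integrable g μ)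
    (hf0 : ∀ x, 0 ≤ f x) (hg0 : ∀ x, 0 ≤ g x) :
    Integrable (fun x => defect ρ (f x) (g x)) μ := by
  refine ((integrable_kernel hρ.le hf hg hf0 hg0).sub
    ((hf.const_mul (tangentCoeffs ρ).1).fun_add (hg.const_mul (tangentCoeffs ρ).2))).congr
    (.of_forall fun x => ?_)
  simp only [Pi.sub_apply, kernel_eq_tangent_add_defect hρ (hf0 x) (hg0 x)]
  ring

lemma integral_kernel_eq (hρ : 0 < ρ) (hf : Integrable f μ) (hg : Integrable g μ)
    (hf0 : ∀ x, 0 ≤ f x) (hg0 : ∀ x, 0 ≤ g x) (hf1 : ∫ x, f x ∂μ = 1) (hg1 : ∫ x, g x ∂μ = 1) :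
    ∫ x, kernel ρ (f x) (g x) ∂μ =
      (1 + ρ ^ 2) / (1 + ρ) ^ 2 + ∫ x, defect ρ (f x) (g x) ∂μ := by
  simp only [kernel_eq_tangent_add_defect hρ (hf0 _) (hg0 _)]
  rw [integral_add ((hf.const_mul _).fun_add (hg.const_mul _)) (integrable_defect hρ hf hg hf0 hg0),
    integral_add (hf.const_mul _) (hg.const_mul _), integral_const_mul, integral_const_mul, hf1,
    hg1, mul_one, mul_one, tangentCoeffs_fst_add_snd (by linarith)]

lemma integral_defect_pos (hρ : 0 < ρ) (hf : Integrable f μ) (hg : Integrable g μ)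
    (hf0 : ∀ x, 0 ≤ f x) (hg0 : ∀ x, 0 ≤ g x) (hne : 0 < μ {x | f x ≠ g x}) :
    0 < ∫ x, defect ρ (f x) (g x) ∂μ := by
  rw [integral_pos_iff_support_of_nonneg (fun x => defect_nonneg hρ.le (hf0 x) (hg0 x))
    (integrable_defect hρ hf hg hf0 hg0)]
  exact hne.trans_le <| measure_mono fun x hx => (defect_pos hρ (hf0 x) (hg0 x) hx).ne'

lemma setIntegral_kernel_eq_integral (hρ : 0 ≤ ρ) (hf0 : ∀ x, 0 ≤ f x) (hg0 : ∀ x, 0 ≤ g x) :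
    ∫ x in {x | 0 < f x + ρ * g x}, kernel ρ (f x) (g x) ∂μ = ∫ x, kernel ρ (f x) (g x) ∂μ :=
  setIntegral_eq_integral_of_forall_compl_eq_zero fun x hx => kernel_of_add_eq_zero <|
    (not_lt.mp hx).antisymm (add_nonneg (hf0 x) (mul_nonneg hρ (hg0 x)))

end HenzePenrose

theorem henze_penrose_strict_general (d : ℕ)
    (f0 g : EuclideanSpace ℝ (Fin d) → ℝ) (rho : ℝ) (hrho : 0 < rho)
    (hf0nn : ∀ x, 0 ≤ f0 x) (hgnn : ∀ x, 0 ≤ g x)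
    (hf0int : ∫ x, f0 x = 1) (hgint : ∫ x, g x = 1)
    (hf0i : MeasureTheory.Integrable f0) (hgi : MeasureTheory.Integrable g)
    (hne : 0 < MeasureTheory.volume {x | f0 x ≠ g x}) :
    (1 + rho ^ 2) / (1 + rho) ^ 2 <
      ∫ x in {x | 0 < f0 x + rho * g x},
        (f0 x ^ 2 + rho ^ 2 * g x ^ 2) / ((1 + rho) * (f0 x + rho * g x)) := by
  change _ < ∫ x in _, HenzePenrose.kernel rho (f0 x) (g x)
  rw [HenzePenrose.setIntegral_kernel_eq_integral hrho.le hf0nn hgnn,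
    HenzePenrose.integral_kernel_eq hrho hf0i hgi hf0nn hgnn hf0int hgint]
  exact lt_add_of_pos_right _ (HenzePenrose.integral_defect_pos hrho hf0i hgi hf0nn hgnn hne)

/-- Henze–Penrose: if the densities `f₀` and `g` differ on a set of positive
measure, then `δ(f₀,g,ρ) > (1+ρ²)/(1+ρ)²`. -/
theorem henze_penrose_strict (d : ℕ) (hd : 1 ≤ d)
    (f0 g : EuclideanSpace ℝ (Fin d) → ℝ) (rho : ℝ) (hrho : 0 < rho)
    (hf0meas : Measurable f0) (hgmeas : Measurable g)
    (hf0nn : ∀ x, 0 ≤ f0 x) (hgnn : ∀ x, 0 ≤ g x)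
    (hf0int : ∫ x, f0 x = 1) (hgint : ∫ x, g x = 1)
    (hf0i : MeasureTheory.Integrable f0) (hgi : MeasureTheory.Integrable g)
    (hne : 0 < MeasureTheory.volume {x | f0 x ≠ g x}) :
    (1 + rho ^ 2) / (1 + rho) ^ 2 <
      ∫ x in {x | 0 < f0 x + rho * g x},
        (f0 x ^ 2 + rho ^ 2 * g x ^ 2) / ((1 + rho) * (f0 x + rho * g x)) :=
  henze_penrose_strict_general d f0 g rho hrho hf0nn hgnn hf0int hgint hf0i hgi hne
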